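/- Let I = I_{V_c} be the monomial codimension-c star configuration ideal in R = k[x_0,…,x_N] (arising from the N+1 coordinate hyperplanes of P^N), where 1 ≤ c ≤ N. Let l ≥ 1 and write l = qc + r with integers q ≥ 0 and 1 ≤ r ≤ c. Then the least degree of a nonzero homogeneous element of the symbolic power I^{(l)} is α(I^{(l)}) = (q+1)(N+1) − c + r. -/

import Mathlib

/-!
A monomial lies in `P_S^ℓ` exactly when its exponents sum to at least `ℓ` over `S`, so the
monomials of `I^{(l)}` are those whose exponent vector `e` has every `c`-subset sum
`≥ l = qc + r`.
Fewer than `c` entries of such an `e` are `≤ q` (otherwise `c` of them would sum to at most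
`qc < l`), so a `c`-subset `S` containing all of them has the `N + 1 - c` entries outside `S`
each `≥ q + 1`, and the total degree is at least `l + (N + 1 - c)(q + 1)`. Equality is attained
by `e = q + 1` on `N + 1 - c + r` coordinates and `e = q` on the remaining `c - r`: every
`c`-subset meets the first group in at least `r` points.
-/

open MvPolynomial

noncomputable section

/-- The monomial codimension-`c` star configuration ideal in `k[x_0, …, x_N]`:
the intersection of the ideals `P_S = (x_i : i ∈ S)` over all subsets `S` of
cardinality `c`. -/
def monoStar (k : Type*) [Field k] (N c : ℕ) : Ideal (MvPolynomial (Fin (N + 1)) k) :=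
  ⨅ (S : Finset (Fin (N + 1))) (_ : S.card = c),
    Ideal.span ((fun i => (X i : MvPolynomial (Fin (N + 1)) k)) '' ↑S)

/-- The `ℓ`-th symbolic power of the monomial star configuration ideal. -/
def monoStarSym (k : Type*) [Field k] (N c ℓ : ℕ) : Ideal (MvPolynomial (Fin (N + 1)) k) :=
  ⨅ (S : Finset (Fin (N + 1))) (_ : S.card = c),
    (Ideal.span ((fun i => (X i : MvPolynomial (Fin (N + 1)) k)) '' ↑S)) ^ ℓ

/-- The initial degree of an ideal: the least degree of a nonzero homogeneous element. -/
def initialDegree {k : Type*} [Field k] {N : ℕ}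
    (J : Ideal (MvPolynomial (Fin (N + 1)) k)) : ℕ :=
  sInf {d : ℕ | ∃ f ∈ J, f ≠ 0 ∧ f.IsHomogeneous d}

namespace MvPolynomial

variable {σ R : Type*} [CommSemiring R]

theorem le_sum_of_mem_support_mul {S : Finset σ} {f g : MvPolynomial σ R} {a b : ℕ}
    (hf : ∀ m ∈ f.support, a ≤ ∑ i ∈ S, m i) (hg : ∀ m ∈ g.support, b ≤ ∑ i ∈ S, m i) :
    ∀ m ∈ (f * g).support, a + b ≤ ∑ i ∈ S, m i := by
  classical
  intro m hm
  obtain ⟨u, hu, v, hv, rfl⟩ := Finset.mem_add.mp (support_mul f g hm)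
  simpa [Finset.sum_add_distrib] using add_le_add (hf u hu) (hg v hv)

theorem le_sum_of_mem_span_X_pow {S : Finset σ} {ℓ : ℕ} {f : MvPolynomial σ R}
    (hf : f ∈ Ideal.span (X '' ↑S) ^ ℓ) : ∀ m ∈ f.support, ℓ ≤ ∑ i ∈ S, m i := by
  classical
  induction hf using Submodule.pow_induction_on_left' with
  | algebraMap => simp
  | add f g i _ _ hf hg =>
    intro m hm
    rcases Finset.mem_union.mp (support_add hm) with hm | hm
    exacts [hf m hm, hg m hm]
  | mem_mul g hg i f _ hf =>
    rw [Nat.succ_eq_one_add]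
    refine le_sum_of_mem_support_mul (fun m hm => ?_) hf
    obtain ⟨j, hj, hmj⟩ := mem_ideal_span_X_image.mp hg m hm
    exact (Nat.one_le_iff_ne_zero.mpr hmj).trans (Finset.single_le_sum (by simp) hj)

theorem monomial_mem_span_X_pow [Fintype σ] [DecidableEq σ] {S : Finset σ} {ℓ : ℕ}
    {e : σ →₀ ℕ} (a : R) (he : ℓ ≤ ∑ i ∈ S, e i) :
    monomial e a ∈ Ideal.span (X '' ↑S) ^ ℓ := by
  have hS : ∏ i ∈ S, X i ^ e i ∈ Ideal.span (X '' ↑S : Set (MvPolynomial σ R)) ^ ℓ := by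
    refine Ideal.pow_le_pow_right he ?_
    rw [← Finset.prod_pow_eq_pow_sum]
    exact Ideal.prod_mem_prod fun i hi =>
      Ideal.pow_mem_pow (Ideal.subset_span (Set.mem_image_of_mem X hi)) _
  rw [monomial_eq, Finsupp.prod_fintype _ _ (by simp), ← Finset.prod_mul_prod_compl S]
  exact Ideal.mul_mem_left _ _ (Ideal.mul_mem_right _ _ hS)

end MvPolynomial

namespace Finset

variable {α : Type*} [DecidableEq α]

theorem sum_add_ite_mem (S A : Finset α) (q : ℕ) :
    ∑ i ∈ S, (q + if i ∈ A then 1 else 0) = #S * q + #(S ∩ A) := by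
  rw [sum_add_distrib, sum_const, smul_eq_mul, sum_boole, Nat.cast_id, filter_mem_eq_inter,
    mul_comm]

theorem le_sum_add_ite_mem [Fintype α] {S A : Finset α} {q r : ℕ} (hA : #Aᶜ + r ≤ #S) :
    #S * q + r ≤ ∑ i ∈ S, (q + if i ∈ A then 1 else 0) := by
  have hsplit := card_inter_add_card_sdiff S A
  have hsdiff : #(S \ A) ≤ #Aᶜ := card_le_card fun i hi => mem_compl.mpr (mem_sdiff.mp hi).2
  rw [sum_add_ite_mem]
  omega

theorem add_mul_card_compl_le_sum [Fintype α] {e : α → ℕ} {c q l : ℕ}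
    (hc : c ≤ Fintype.card α) (hl : q * c < l)
    (he : ∀ S : Finset α, #S = c → l ≤ ∑ i ∈ S, e i) :
    l + (Fintype.card α - c) * (q + 1) ≤ ∑ i, e i := by
  set A := univ.filter fun i => e i ≤ q
  have hA : #A ≤ c := by
    by_contra! hA
    obtain ⟨T, hTA, hT⟩ := exists_subset_card_eq hA.le
    have hsum : ∑ i ∈ T, e i ≤ #T • q :=
      sum_le_card_nsmul T e q fun i hi => (mem_filter.mp (hTA hi)).2
    rw [hT, smul_eq_mul] at hsum
    linarith [he T hT]
  obtain ⟨S, hAS, -, hS⟩ := exists_subsuperset_card_eq (subset_univ A) hA (by simpa using hc)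
  have hcompl : #Sᶜ • (q + 1) ≤ ∑ i ∈ Sᶜ, e i :=
    card_nsmul_le_sum _ e _ fun i hi => by
      by_contra! h
      exact mem_compl.mp hi (hAS (mem_filter.mpr ⟨mem_univ i, by omega⟩))
  rw [card_compl, hS, smul_eq_mul] at hcompl
  rw [← sum_add_sum_compl S]
  exact add_le_add (he S hS) hcompl

end Finset

section MonoStarSym

open Finset

variable {k : Type*} [Field k] {N c l : ℕ}

theorem initialDegree_eq_of_monomial_mem {J : Ideal (MvPolynomial (Fin (N + 1)) k)} {D : ℕ}
    {e : Fin (N + 1) →₀ ℕ} (he : monomial e 1 ∈ J) (hdeg : e.degree = D)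
    (hle : ∀ f ∈ J, ∀ m ∈ f.support, D ≤ m.degree) : initialDegree J = D := by
  have hD : D ∈ {d : ℕ | ∃ f ∈ J, f ≠ 0 ∧ f.IsHomogeneous d} :=
    ⟨_, he, monomial_eq_zero.not.mpr one_ne_zero, isHomogeneous_monomial _ hdeg⟩
  refine le_antisymm (Nat.sInf_le hD) (le_csInf ⟨D, hD⟩ ?_)
  rintro d ⟨f, hf, hf0, hfd⟩
  obtain ⟨m, hm⟩ := support_nonempty.mpr hf0
  rw [hfd.degree_eq_sum_deg_support hm]
  exact hle f hf m hm

theorem mem_monoStarSym_iff {f : MvPolynomial (Fin (N + 1)) k} :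
    f ∈ monoStarSym k N c l ↔
      ∀ S : Finset (Fin (N + 1)), #S = c → f ∈ Ideal.span (X '' ↑S) ^ l := by
  simp [monoStarSym]

theorem monomial_mem_monoStarSym {e : Fin (N + 1) →₀ ℕ} (a : k)
    (he : ∀ S : Finset (Fin (N + 1)), #S = c → l ≤ ∑ i ∈ S, e i) :
    monomial e a ∈ monoStarSym k N c l :=
  mem_monoStarSym_iff.mpr fun S hS => monomial_mem_span_X_pow a (he S hS)

theorem exists_monomial_mem_monoStarSym {q r : ℕ} (hc : c ≤ N + 1) (hl : l = q * c + r)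
    (hr : r ≤ c) : ∃ e : Fin (N + 1) →₀ ℕ,
      monomial e (1 : k) ∈ monoStarSym k N c l ∧ e.degree = (N + 1) * q + (N + 1 - c + r) := by
  classical
  obtain ⟨A, -, hA⟩ := exists_subset_card_eq (s := (univ : Finset (Fin (N + 1))))
    (n := N + 1 - c + r) (by simp; omega)
  refine ⟨Finsupp.equivFunOnFinite.symm fun i => q + if i ∈ A then 1 else 0,
    monomial_mem_monoStarSym 1 fun S hS => ?_, ?_⟩
  · simpa [hl, hS, mul_comm] using le_sum_add_ite_mem (q := q) (A := A) (S := S)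
      (by rw [card_compl, hA, hS]; simp; omega)
  · simp [Finsupp.degree_eq_sum, sum_add_ite_mem, hA]

theorem add_mul_le_degree_of_mem_monoStarSym {q : ℕ} (hc : c ≤ N + 1) (hl : q * c < l)
    {f : MvPolynomial (Fin (N + 1)) k} (hf : f ∈ monoStarSym k N c l)
    {m : Fin (N + 1) →₀ ℕ} (hm : m ∈ f.support) :
    l + (N + 1 - c) * (q + 1) ≤ m.degree := by
  classical
  simpa [Finsupp.degree_eq_sum] using add_mul_card_compl_le_sum (e := ⇑m) (by simpa using hc) hl
    fun S hS => le_sum_of_mem_span_X_pow (mem_monoStarSym_iff.mp hf S hS) m hm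

end MonoStarSym

theorem monoStar_symbolic_initial_degree_general {k : Type*} [Field k]
    {N c l q r : ℕ} (hc2 : c ≤ N)
    (hl : l = q * c + r) (hr1 : 1 ≤ r) (hr2 : r ≤ c) :
    initialDegree (monoStarSym k N c l) = (q + 1) * (N + 1) - c + r := by
  have hD : (N + 1) * q + (N + 1 - c + r) = (q + 1) * (N + 1) - c + r ∧
      l + (N + 1 - c) * (q + 1) = (q + 1) * (N + 1) - c + r := by
    obtain ⟨t, rfl⟩ := Nat.exists_eq_add_of_le hc2
    rw [hl, show c + t + 1 - c = t + 1 by omega]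
    constructor <;> ring_nf <;> omega
  obtain ⟨e, he, hdeg⟩ := exists_monomial_mem_monoStarSym (k := k) (N := N) (by omega) hl hr2
  refine initialDegree_eq_of_monomial_mem he (hdeg.trans hD.1) fun f hf m hm => ?_
  rw [← hD.2]
  exact add_mul_le_degree_of_mem_monoStarSym (by omega) (by omega) hf hm

theorem monoStar_symbolic_initial_degree {k : Type*} [Field k] [Infinite k]
    {N c l q r : ℕ} (hN : 1 ≤ N) (hc1 : 1 ≤ c) (hc2 : c ≤ N)
    (hl : l = q * c + r) (hr1 : 1 ≤ r) (hr2 : r ≤ c) :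
    initialDegree (monoStarSym k N c l) = (q + 1) * (N + 1) - c + r :=
  monoStar_symbolic_initial_degree_general hc2 hl hr1 hr2
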